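/- Let G be a 2-edge-connected graph and let {v1, ..., vk} be the vertices of a cycle C_k in G forming a C_k cut, i.e., G \ {v1,...,vk} is disconnected, with partition (V1, V2) of the remaining vertices having no edges between V1 and V2. Let G_i = G[V_i ∪ {v1,...,vk}] and G'_i = G_i | {v1,...,vk} for i ∈ {1,2}. If H_1 and H_2 are 2-edge-connected spanning subgraphs of G'_1 and G'_2 respectively, then H_1 ∪ H_2 ∪ {v1v2, v2v3, ..., v_{k-1}v_k, v_k v1} is a 2-edge-connected spanning subgraph of G. -/

import Mathlib

variable {V : Type*}

/-- Reachability between vertices using only edges from the edge set `F`. -/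
def ReachE (F : Set (Sym2 V)) (a b : V) : Prop :=
  Relation.ReflTransGen (fun x y => s(x, y) ∈ F) a b

/-- Reachability after contracting the vertex set `W` to a single vertex: besides
traversing edges of `F`, one may freely move between any two vertices of `W`. -/
def QReach (W : Set V) (F : Set (Sym2 V)) (a b : V) : Prop :=
  Relation.ReflTransGen (fun x y => s(x, y) ∈ F ∨ (x ∈ W ∧ y ∈ W)) a b

/-- `H` is a 2-edge-connected spanning subgraph. -/
def TwoECSS (H : Set (Sym2 V)) : Prop :=
  (∀ a b : V, ReachE H a b) ∧ ∀ e ∈ H, ∀ a b : V, ReachE (H \ {e}) a b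

/-- `F` is a 2-edge-connected spanning subgraph of the graph `(G[U]) | W`, obtained
from the subgraph of `G` induced on `U` by contracting the vertex set `W ⊆ U` into a
single vertex. -/
def TwoECContr (G : SimpleGraph V) (U W : Set V) (F : Set (Sym2 V)) : Prop :=
  F ⊆ G.edgeSet ∧ (∀ e ∈ F, ∀ x ∈ e, x ∈ U) ∧
    (∀ a ∈ U, ∀ b ∈ U, QReach W F a b) ∧
    ∀ e ∈ F, ∀ a ∈ U, ∀ b ∈ U, QReach W (F \ {e}) a b

/-! Removing an edge `e` from `H1 ∪ H2 ∪ C` leaves the cycle vertices connected through the cycle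
edges other than `e`, so the free moves inside the contracted vertex of each `G'_i` can be
replaced by real paths. Every vertex lies in `V1 ∪ C` or `V2 ∪ C`, both containing `v 0`, so the
two sides connect through the cycle. -/

lemma ReachE.mono {F F' : Set (Sym2 V)} (h : F ⊆ F') {a b : V} (hab : ReachE F a b) :
    ReachE F' a b :=
  Relation.ReflTransGen.mono (fun _ _ hxy => h hxy) _ _ hab

lemma ReachE.symm {F : Set (Sym2 V)} {a b : V} (hab : ReachE F a b) : ReachE F b a :=
  haveI : Std.Symm (fun x y : V => s(x, y) ∈ F) := ⟨fun _ _ hxy => by rwa [Sym2.eq_swap]⟩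
  Relation.ReflTransGen.stdSymm.symm _ _ hab

lemma reachE_of_forall_mem {F : Set (Sym2 V)} (f : ℕ → V) (n : ℕ)
    (hf : ∀ m < n, s(f m, f (m + 1)) ∈ F) : ReachE F (f 0) (f n) := by
  induction n with
  | zero => exact Relation.ReflTransGen.refl
  | succ n ih => exact (ih fun m hm => hf m (by omega)).tail (hf n n.lt_succ_self)

lemma reachE_of_cover {S : Set (Sym2 V)} {U₁ U₂ : Set V} (hcov : ∀ x, x ∈ U₁ ∨ x ∈ U₂)
    {c : V} (hc₁ : c ∈ U₁) (hc₂ : c ∈ U₂)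
    (h₁ : ∀ a ∈ U₁, ∀ b ∈ U₁, ReachE S a b) (h₂ : ∀ a ∈ U₂, ∀ b ∈ U₂, ReachE S a b)
    (a b : V) : ReachE S a b := by
  have hc : ∀ x, ReachE S x c := fun x =>
    (hcov x).elim (fun hx => h₁ x hx c hc₁) (fun hx => h₂ x hx c hc₂)
  exact (hc a).trans (hc b).symm

lemma QReach.reachE {W : Set V} {F S : Set (Sym2 V)} (hF : F ⊆ S)
    (hW : ∀ x ∈ W, ∀ y ∈ W, ReachE S x y) {a b : V} (h : QReach W F a b) : ReachE S a b := by
  induction h with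
  | refl => exact Relation.ReflTransGen.refl
  | tail _ hstep ih =>
    rcases hstep with hmem | ⟨hx, hy⟩
    · exact ih.tail (hF hmem)
    · exact ih.trans (hW _ hx _ hy)

lemma TwoECContr.qReach_diff {G : SimpleGraph V} {U W : Set V} {F : Set (Sym2 V)}
    (hF : TwoECContr G U W F) (e : Sym2 V) : ∀ a ∈ U, ∀ b ∈ U, QReach W (F \ {e}) a b := by
  by_cases he : e ∈ F
  · exact hF.2.2.2 e he
  · rw [Set.sdiff_singleton_eq_self he]
    exact hF.2.2.1

lemma twoECSS_of_forall_reachE_diff {H : Set (Sym2 V)}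
    (h : ∀ e : Sym2 V, ∀ a b : V, ReachE (H \ {e}) a b) : TwoECSS H :=
  ⟨fun a b => (h s(a, a) a b).mono Set.sdiff_subset, fun e _ => h e⟩

lemma ZMod.natCast_ne_zero_of_lt {k n : ℕ} (h0 : 0 < n) (hn : n < k) : (n : ZMod k) ≠ 0 :=
  fun h => absurd (Nat.le_of_dvd h0 ((ZMod.natCast_eq_zero_iff n k).mp h)) (by omega)

def cycleEdges {k : ℕ} (v : ZMod k → V) : Set (Sym2 V) :=
  Set.range fun i : ZMod k => s(v i, v (i + 1))

section Cycle

variable {k : ℕ} (hk : 3 ≤ k) {v : ZMod k → V} (hv : Function.Injective v)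
include hk hv

lemma cycleEdge_injective : Function.Injective fun i : ZMod k => s(v i, v (i + 1)) := by
  intro a b h
  rcases Sym2.eq_iff.mp h with ⟨hab, -⟩ | ⟨hab, hba⟩
  · exact hv hab
  · have h2 : ((2 : ℕ) : ZMod k) = 0 := by
      push_cast
      linear_combination hv hba - hv hab
    exact absurd h2 (ZMod.natCast_ne_zero_of_lt two_pos (by omega))

-- Walking forward from `v (i + 1)` reaches every cycle vertex before the edge `v i v (i + 1)`.
lemma reachE_cycleEdges_diff_edge (i j : ZMod k) :
    ReachE (cycleEdges v \ {s(v i, v (i + 1))}) (v (i + 1)) (v j) := by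
  have : NeZero k := ⟨by omega⟩
  have hpath := reachE_of_forall_mem (F := cycleEdges v \ {s(v i, v (i + 1))})
    (fun m => v (i + 1 + m)) (j - (i + 1)).val fun m hm => by
      rw [Nat.cast_succ, ← add_assoc]
      refine ⟨⟨_, rfl⟩, fun heq => ?_⟩
      have hi : ((m + 1 : ℕ) : ZMod k) = 0 := by
        push_cast
        linear_combination cycleEdge_injective hk hv (Set.mem_singleton_iff.mp heq)
      have hlt := ZMod.val_lt (j - (i + 1))
      exact ZMod.natCast_ne_zero_of_lt m.succ_pos (by omega) hi
  simpa only [Nat.cast_zero, add_zero, ZMod.natCast_val, ZMod.cast_id', id,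
    add_sub_cancel] using hpath

lemma reachE_cycleEdges_diff (e : Sym2 V) (i j : ZMod k) :
    ReachE (cycleEdges v \ {e}) (v i) (v j) := by
  by_cases he : e ∈ cycleEdges v
  · obtain ⟨i₀, rfl⟩ := he
    exact (reachE_cycleEdges_diff_edge hk hv i₀ i).symm.trans
      (reachE_cycleEdges_diff_edge hk hv i₀ j)
  · rw [Set.sdiff_singleton_eq_self he]
    exact ReachE.mono Set.sdiff_subset ((reachE_cycleEdges_diff_edge hk hv 0 i).symm.trans
      (reachE_cycleEdges_diff_edge hk hv 0 j))

end Cycle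

theorem glue_at_cycle_cut_general (G : SimpleGraph V)
    (k : ℕ) (hk : 3 ≤ k)
    (v : ZMod k → V) (hvinj : Function.Injective v)
    (V1 V2 : Set V)
    (hpart : V1 ∪ V2 = (Set.range v)ᶜ)
    (H1 H2 : Set (Sym2 V))
    (hH1 : TwoECContr G (V1 ∪ Set.range v) (Set.range v) H1)
    (hH2 : TwoECContr G (V2 ∪ Set.range v) (Set.range v) H2) :
    TwoECSS (H1 ∪ H2 ∪ Set.range fun i : ZMod k => s(v i, v (i + 1))) := by
  refine twoECSS_of_forall_reachE_diff fun e => ?_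
  have hC : ∀ x ∈ Set.range v, ∀ y ∈ Set.range v,
      ReachE ((H1 ∪ H2 ∪ cycleEdges v) \ {e}) x y := by
    rintro _ ⟨i, rfl⟩ _ ⟨j, rfl⟩
    exact (reachE_cycleEdges_diff hk hvinj e i j).mono
      (Set.sdiff_subset_sdiff_left Set.subset_union_right)
  have hside : ∀ {U : Set V} {H : Set (Sym2 V)}, TwoECContr G U (Set.range v) H →
      H ⊆ H1 ∪ H2 ∪ cycleEdges v → ∀ a ∈ U, ∀ b ∈ U,
        ReachE ((H1 ∪ H2 ∪ cycleEdges v) \ {e}) a b :=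
    fun hH hsub a ha b hb =>
      (hH.qReach_diff e a ha b hb).reachE (Set.sdiff_subset_sdiff_left hsub) hC
  have hcov : ∀ x, x ∈ V1 ∪ Set.range v ∨ x ∈ V2 ∪ Set.range v := by
    intro x
    by_cases hx : x ∈ Set.range v
    · exact .inl (.inr hx)
    · rcases (hpart ▸ hx : x ∈ V1 ∪ V2) with hx | hx
      exacts [.inl (.inl hx), .inr (.inl hx)]
  exact reachE_of_cover hcov (.inr ⟨0, rfl⟩) (.inr ⟨0, rfl⟩)
    (hside hH1 fun _ h => .inl (.inl h)) (hside hH2 fun _ h => .inl (.inr h))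

/-- Let `G` be a 2-edge-connected graph and `v 0, ..., v (k-1)` the vertices of a cycle
`C_k` in `G` forming a `C_k` cut: `G \ {v 0, ..., v (k-1)}` is disconnected, with a
partition `(V1, V2)` of the remaining vertices having no edges between `V1` and `V2`.
Let `G_i = G[V_i ∪ {v 0, ..., v (k-1)}]` and `G'_i = G_i | {v 0, ..., v (k-1)}`.
If `H1` and `H2` are 2-edge-connected spanning subgraphs of `G'_1` and `G'_2`
respectively, then `H1 ∪ H2 ∪ {v 0 v 1, v 1 v 2, ..., v (k-1) v 0}` is a
2-edge-connected spanning subgraph of `G`. -/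
theorem glue_at_cycle_cut (G : SimpleGraph V)
    (hG : TwoECSS (G.edgeSet : Set (Sym2 V)))
    (k : ℕ) (hk : 3 ≤ k)
    (v : ZMod k → V) (hvinj : Function.Injective v)
    (hcyc : ∀ i : ZMod k, G.Adj (v i) (v (i + 1)))
    (V1 V2 : Set V)
    (hpart : V1 ∪ V2 = (Set.range v)ᶜ) (hdisj : Disjoint V1 V2)
    (h1 : V1.Nonempty) (h2 : V2.Nonempty)
    (hsep : ∀ a ∈ V1, ∀ b ∈ V2, ¬ G.Adj a b)
    (H1 H2 : Set (Sym2 V))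
    (hH1 : TwoECContr G (V1 ∪ Set.range v) (Set.range v) H1)
    (hH2 : TwoECContr G (V2 ∪ Set.range v) (Set.range v) H2) :
    TwoECSS (H1 ∪ H2 ∪ Set.range fun i : ZMod k => s(v i, v (i + 1))) :=
  glue_at_cycle_cut_general G k hk v hvinj V1 V2 hpart H1 H2 hH1 hH2
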